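/- arXiv:1603.05086 — 3 statements merged into one kernel-verified Lean document; each statement's English description precedes it below -/
import Mathlib

section
/- Let p be an odd prime with p ≡ 3 (mod 8). Then the linear complexity over Z_4 of the quaternary sequence (s_u)_{u≥0} equals 2p - 1. -/
open Polynomial

/-- The generalized cyclotomic class `D_i = {g^(2n+i) mod 2p : n = 0,...,(p-3)/2}` in `Z_{2p}`. -/
def Dcl (p g : ℕ) (i : ℕ) : Finset (ZMod (2 * p)) :=
  (Finset.range ((p - 1) / 2)).image (fun n => (g : ZMod (2 * p)) ^ (2 * n + i))

/-- The generalized cyclotomic class `E_i = {2u mod 2p : u ∈ D_i}` in `Z_{2p}`. -/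
def Ecl (p g : ℕ) (i : ℕ) : Finset (ZMod (2 * p)) :=
  (Dcl p g i).image (fun u => 2 * u)

/-- The quaternary sequence `(s_u)` over `Z_4` of period `2p`. -/
def seqS (p g : ℕ) (u : ℕ) : ZMod 4 :=
  if (u : ZMod (2 * p)) = 0 ∨ (u : ZMod (2 * p)) ∈ Dcl p g 0 then 0
  else if (u : ZMod (2 * p)) ∈ Dcl p g 1 then 1
  else if (u : ZMod (2 * p)) = (p : ZMod (2 * p)) ∨ (u : ZMod (2 * p)) ∈ Ecl p g 0 then 2
  else 3

/-- The generating polynomial `S(X) = s_0 + s_1 X + ... + s_{2p-1} X^{2p-1} ∈ Z_4[X]`. -/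
noncomputable def genPoly (p g : ℕ) : Polynomial (ZMod 4) :=
  ∑ u ∈ Finset.range (2 * p), Polynomial.C (seqS p g u) * Polynomial.X ^ u

/-- The linear complexity over `Z_4` of the sequence `(s_u)`:
`min{ deg C : C ∈ Z_4[X], C(0) = 1, S(X)C(X) ≡ 0 (mod X^{2p} - 1) }`. -/
noncomputable def linComplexity (p g : ℕ) : ℕ :=
  sInf { L | ∃ C : Polynomial (ZMod 4), C.eval 0 = 1 ∧ C.natDegree = L ∧
      (Polynomial.X ^ (2 * p) - 1) ∣ genPoly p g * C }

/-!
By the Chinese remainder theorem `s_u` depends only on `u mod 2` and on the quadratic character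
of `u mod p`: as `g` is a primitive root, `D₀` and `D₁` consist of the odd residues that are
non-zero squares, resp. non-squares, mod `p`, and as `2` is a non-square for `p ≡ 3 (mod 8)`,
`E₀` and `E₁` consist of the even residues that are non-squares, resp. non-zero squares, mod `p`.

Upper bound: `S(1) = 2 + 3 (p - 1) ≡ 0 (mod 4)`, so `X - 1 ∣ S` and
`C = 1 + X + ⋯ + X^(2p-1)` works.

Lower bound: reduce mod `2`. Over `𝔽₂`, `X^(2p) - 1 = (X - 1)² Φ²` with `Φ = 1 + X + ⋯ + X^(p-1)`.
At a root `β` of `Φ` the reduced `S̄` evaluates to `∑_{x ≠ 0} β^x = 1`, so `S̄` is coprime to `Φ`;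
and `S̄'(1)` counts the non-squares mod `p`, `(p - 1)/2`, which is odd, so `(X - 1)² ∤ S̄`.
Hence `(X - 1) Φ²`, of degree `2p - 1`, divides every admissible `C̄`.
-/

open Finset

namespace ZMod

theorem natCast_eq_natCast_iff_of_coprime {m n : ℕ} (h : m.Coprime n) (a b : ℕ) :
    (a : ZMod (m * n)) = b ↔ (a : ZMod m) = b ∧ (a : ZMod n) = b := by
  simp only [natCast_eq_natCast_iff, Nat.modEq_and_modEq_iff_modEq_mul h]

theorem sum_range_natCast {M : Type*} [AddCommMonoid M] (N : ℕ) [NeZero N] (F : ZMod N → M) :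
    ∑ u ∈ range N, F u = ∑ x, F x := by
  refine sum_nbij' (↑) val (by simp) (fun x _ => by simpa using x.val_lt) ?_ ?_ (by simp)
  · intro u hu
    simp [val_natCast_of_lt (mem_range.mp hu)]
  · intro x _
    simp

theorem sum_range_mul_eq_sum_sum {M : Type*} [AddCommMonoid M] {m n : ℕ} [NeZero m] [NeZero n]
    (h : m.Coprime n) (F : ZMod m → ZMod n → M) :
    ∑ u ∈ range (m * n), F u u = ∑ a, ∑ x, F a x := by
  rw [← Fintype.sum_prod_type', ← (chineseRemainder h).toEquiv.sum_comp, ← sum_range_natCast]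
  refine sum_congr rfl fun u _ => ?_
  simp [chineseRemainder]

theorem sum_univ_two {M : Type*} [AddCommMonoid M] (f : ZMod 2 → M) : ∑ a, f a = f 0 + f 1 :=
  Fin.sum_univ_two f

end ZMod

namespace Polynomial

theorem natDegree_geom_sum_X {R : Type*} [CommRing R] [Nontrivial R] {N : ℕ} (hN : N ≠ 0) :
    (∑ i ∈ range N, (X : R[X]) ^ i).natDegree = N - 1 := by
  have h := congrArg natDegree (mul_geom_sum (X : R[X]) N)
  rw [← C_1, (monic_X_sub_C 1).natDegree_mul (monic_geom_sum_X hN), natDegree_X_sub_C,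
    natDegree_X_pow_sub_C] at h
  omega

theorem X_pow_sub_one_dvd_mul_geom_sum {R : Type*} [CommRing R] {S : R[X]} (hS : S.eval 1 = 0)
    (N : ℕ) : X ^ N - 1 ∣ S * ∑ i ∈ range N, X ^ i := by
  rw [← mul_geom_sum]
  exact mul_dvd_mul_right (by simpa using dvd_iff_isRoot.mpr hS) _

theorem X_pow_two_mul_sub_one_eq_of_charP_two {R : Type*} [CommRing R] [CharP R 2] (N : ℕ) :
    (X ^ (2 * N) - 1 : R[X]) = (X - C 1) ^ 2 * (∑ i ∈ range N, X ^ i) ^ 2 := by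
  rw [← mul_pow, C_1, mul_geom_sum, sub_pow_char, one_pow, ← pow_mul, mul_comm]

theorem eval_derivative_eq_zero_of_sq_dvd {R : Type*} [CommRing R] {a : R} {f : R[X]}
    (h : (X - C a) ^ 2 ∣ f) : (derivative f).eval a = 0 := by
  obtain ⟨q, rfl⟩ := h
  simp [derivative_mul, derivative_pow]

theorem le_natDegree_of_sq_mul_sq_dvd_mul {R : Type*} [CommRing R] [IsDomain R]
    {q h S Q : R[X]} (hq : Prime q) (hqS : ¬q ^ 2 ∣ S) (hqh : IsCoprime q h)
    (hhS : IsCoprime h S) (hQ : Q ≠ 0) (hdvd : q ^ 2 * h ^ 2 ∣ S * Q) :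
    q.natDegree + 2 * h.natDegree ≤ Q.natDegree := by
  have hqQ : q ∣ Q := by
    by_contra hqQ
    exact hqS (hq.pow_dvd_of_dvd_mul_right 2 hqQ (dvd_of_mul_right_dvd hdvd))
  have hhQ : h ^ 2 ∣ Q := hhS.pow_left.dvd_of_dvd_mul_left (dvd_of_mul_left_dvd hdvd)
  have hqhQ := hqh.pow_right.mul_dvd hqQ hhQ
  have hne : q * h ^ 2 ≠ 0 := ne_zero_of_dvd_ne_zero hQ hqhQ
  rw [← natDegree_pow, ← natDegree_mul (left_ne_zero_of_mul hne) (right_ne_zero_of_mul hne)]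
  exact natDegree_le_of_dvd hqhQ hQ

end Polynomial

namespace IsPrimitiveRoot

variable {p : ℕ} [Fact p.Prime] {ζ : ZMod p}

theorem quadraticChar_pow (hζ : IsPrimitiveRoot ζ (p - 1)) (hp2 : p ≠ 2) (m : ℕ) :
    quadraticChar (ZMod p) (ζ ^ m) = (-1) ^ m := by
  have hp := (Fact.out : p.Prime).two_le
  rw [map_pow, quadraticChar_eq_pow_of_char_ne_two (by rwa [ZMod.ringChar_zmod_n])
    (hζ.ne_zero (by omega)), if_neg]
  rw [ZMod.card]
  exact hζ.pow_ne_one_of_pos_of_lt (by omega) (by omega)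

theorem exists_pow_eq_iff_quadraticChar (hζ : IsPrimitiveRoot ζ (p - 1)) (hp2 : p ≠ 2)
    {i : ℕ} (hi : i < 2) (x : ZMod p) :
    (∃ n < (p - 1) / 2, ζ ^ (2 * n + i) = x) ↔
      x ≠ 0 ∧ quadraticChar (ZMod p) x = (-1) ^ i := by
  have hp := (Fact.out : p.Prime).two_le
  constructor
  · rintro ⟨n, -, rfl⟩
    refine ⟨pow_ne_zero _ (hζ.ne_zero (by omega)), ?_⟩
    rw [hζ.quadraticChar_pow hp2, pow_add, pow_mul]
    simp
  · rintro ⟨hx, hχ⟩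
    have : NeZero (p - 1) := ⟨by omega⟩
    obtain ⟨m, hm, rfl⟩ := hζ.eq_pow_of_pow_eq_one (ZMod.pow_card_sub_one_eq_one hx)
    rw [hζ.quadraticChar_pow hp2, neg_one_pow_eq_pow_mod_two,
      neg_one_pow_eq_pow_mod_two (n := i)] at hχ
    have hmi : m % 2 = i := by
      have := Nat.mod_lt m two_pos
      interval_cases i <;> interval_cases h : m % 2 <;> simp_all
    have := (Fact.out : p.Prime).odd_of_ne_two hp2
    exact ⟨m / 2, by grind, by rw [← hmi, Nat.div_add_mod]⟩

theorem exists_two_mul_pow_eq_iff_quadraticChar (hζ : IsPrimitiveRoot ζ (p - 1)) (hp2 : p ≠ 2)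
    (h2 : quadraticChar (ZMod p) 2 = -1) {i : ℕ} (hi : i < 2) (x : ZMod p) :
    (∃ n < (p - 1) / 2, 2 * ζ ^ (2 * n + i) = x) ↔
      x ≠ 0 ∧ quadraticChar (ZMod p) x = -(-1) ^ i := by
  have h2ne : (2 : ZMod p) ≠ 0 := fun h => by simp [h] at h2
  simp_rw [← eq_inv_mul_iff_mul_eq₀ h2ne, hζ.exists_pow_eq_iff_quadraticChar hp2 hi]
  have hχ : quadraticChar (ZMod p) x = -quadraticChar (ZMod p) (2⁻¹ * x) := by
    rw [← neg_one_mul, ← h2, ← map_mul, mul_inv_cancel_left₀ h2ne]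
  rw [hχ, neg_inj]
  simp [h2ne]

end IsPrimitiveRoot

namespace ZMod

variable {p : ℕ} [Fact p.Prime]

theorem card_quadraticChar_eq_neg_one {ζ : ZMod p} (hζ : IsPrimitiveRoot ζ (p - 1))
    (hp2 : p ≠ 2) : #{x : ZMod p | quadraticChar (ZMod p) x = -1} = (p - 1) / 2 := by
  have hnonsq : ({x | quadraticChar (ZMod p) x = -1} : Finset (ZMod p)) =
      (range ((p - 1) / 2)).image fun n => ζ ^ (2 * n + 1) := by
    ext x
    simp only [mem_filter, mem_univ, true_and, mem_image, mem_range,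
      hζ.exists_pow_eq_iff_quadraticChar hp2 one_lt_two, pow_one]
    exact ⟨fun h => ⟨fun h0 => by simp [h0] at h, h⟩, And.right⟩
  rw [hnonsq, card_image_of_injOn, card_range]
  intro a ha b hb hab
  simp only [coe_range, Set.mem_Iio] at ha hb
  have := hζ.pow_inj (by omega) (by omega) hab
  omega

theorem quadraticChar_two_of_mod_eight_eq_three (hp8 : p % 8 = 3) :
    quadraticChar (ZMod p) 2 = -1 := by
  classical
  rw [quadraticChar_neg_one_iff_not_isSquare, FiniteField.isSquare_two_iff, card]
  omega

end ZMod

def seqValue (p : ℕ) [Fact p.Prime] (a : ZMod 2) (x : ZMod p) : ZMod 4 :=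
  if x = 0 then (if a = 0 then 0 else 2)
  else if a = 1 then (if quadraticChar (ZMod p) x = 1 then 0 else 1)
  else if quadraticChar (ZMod p) x = 1 then 3 else 2

section Sequence

variable {p g : ℕ}

theorem natCast_mem_Dcl_iff (hp : Odd p) (hgodd : Odd g) (i u : ℕ) :
    (u : ZMod (2 * p)) ∈ Dcl p g i ↔
      (u : ZMod 2) = 1 ∧ ∃ n < (p - 1) / 2, (g : ZMod p) ^ (2 * n + i) = u := by
  have hcrt (m : ℕ) :
      (g : ZMod (2 * p)) ^ m = u ↔ (u : ZMod 2) = 1 ∧ (g : ZMod p) ^ m = u := by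
    have := ZMod.natCast_eq_natCast_iff_of_coprime (Nat.coprime_two_left.mpr hp) (g ^ m) u
    push_cast at this
    rw [this, hgodd.natCast_zmod_two, one_pow, eq_comm]
  simp only [Dcl, mem_image, mem_range, hcrt]
  constructor
  · rintro ⟨n, hn, h1, h⟩
    exact ⟨h1, n, hn, h⟩
  · rintro ⟨h1, n, hn, h⟩
    exact ⟨n, hn, h1, h⟩

theorem natCast_mem_Ecl_iff (hp : Odd p) (i u : ℕ) :
    (u : ZMod (2 * p)) ∈ Ecl p g i ↔
      (u : ZMod 2) = 0 ∧ ∃ n < (p - 1) / 2, 2 * (g : ZMod p) ^ (2 * n + i) = u := by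
  have hcrt (m : ℕ) :
      2 * (g : ZMod (2 * p)) ^ m = u ↔ (u : ZMod 2) = 0 ∧ 2 * (g : ZMod p) ^ m = u := by
    have := ZMod.natCast_eq_natCast_iff_of_coprime (Nat.coprime_two_left.mpr hp) (2 * g ^ m) u
    push_cast at this
    rw [this, show (2 : ZMod 2) = 0 from rfl, zero_mul, eq_comm (a := (0 : ZMod 2))]
  simp only [Ecl, Dcl, image_image, mem_image, mem_range, Function.comp_def, hcrt]
  constructor
  · rintro ⟨n, hn, h0, h⟩
    exact ⟨h0, n, hn, h⟩
  · rintro ⟨h0, n, hn, h⟩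
    exact ⟨n, hn, h0, h⟩

variable [Fact p.Prime]

theorem seqS_eq_seqValue (hp2 : p ≠ 2) (hgodd : Odd g) (hg : IsPrimitiveRoot (g : ZMod p) (p - 1))
    (h2 : quadraticChar (ZMod p) 2 = -1) (u : ℕ) : seqS p g u = seqValue p u u := by
  have hp := (Fact.out : p.Prime).odd_of_ne_two hp2
  have hcrt := ZMod.natCast_eq_natCast_iff_of_coprime (Nat.coprime_two_left.mpr hp) u
  have h0 := hcrt 0
  have hpp := hcrt p
  simp only [Nat.cast_zero, ZMod.natCast_self, hp.natCast_zmod_two] at h0 hpp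
  simp only [seqS, h0, hpp, natCast_mem_Dcl_iff hp hgodd, natCast_mem_Ecl_iff hp,
    hg.exists_pow_eq_iff_quadraticChar hp2 zero_lt_two,
    hg.exists_pow_eq_iff_quadraticChar hp2 one_lt_two,
    hg.exists_two_mul_pow_eq_iff_quadraticChar hp2 h2 zero_lt_two, seqValue]
  generalize (u : ZMod 2) = a
  generalize (u : ZMod p) = x
  have ha : a = 0 ∨ a = 1 := (by decide : ∀ b : ZMod 2, b = 0 ∨ b = 1) a
  by_cases hx : x = 0
  · rcases ha with rfl | rfl <;> simp [hx]
  · rcases quadraticChar_dichotomy hx with hχ | hχ <;> rcases ha with rfl | rfl <;>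
      simp [hx, hχ]

theorem sum_seqValue (x : ZMod p) : ∑ a, seqValue p a x = if x = 0 then 2 else 3 := by
  rw [ZMod.sum_univ_two]
  by_cases hx : x = 0
  · simp [seqValue, hx]
  · rcases quadraticChar_dichotomy hx with hχ | hχ <;> norm_num [seqValue, hx, hχ]

theorem sum_castHom_seqValue (x : ZMod p) :
    ∑ a, ZMod.castHom (by norm_num : 2 ∣ 4) (ZMod 2) (seqValue p a x) =
      if x = 0 then 0 else 1 := by
  rw [ZMod.sum_univ_two]
  by_cases hx : x = 0
  · simp [seqValue, hx]; decide
  · rcases quadraticChar_dichotomy hx with hχ | hχ <;> simp [seqValue, hx, hχ] <;> decide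

theorem castHom_seqValue_one (x : ZMod p) :
    ZMod.castHom (by norm_num : 2 ∣ 4) (ZMod 2) (seqValue p 1 x) =
      if quadraticChar (ZMod p) x = -1 then 1 else 0 := by
  by_cases hx : x = 0
  · simp [seqValue, hx]; decide
  · rcases quadraticChar_dichotomy hx with hχ | hχ <;> simp [seqValue, hx, hχ]

end Sequence

section Evaluation

variable {p g : ℕ} [Fact p.Prime]

noncomputable def genPolyModTwo (p g : ℕ) : (ZMod 2)[X] :=
  (genPoly p g).map (ZMod.castHom (by norm_num : 2 ∣ 4) (ZMod 2))

theorem genPoly_eq_sum_seqValue (hp8 : p % 8 = 3) (hgodd : Odd g)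
    (hg : IsPrimitiveRoot (g : ZMod p) (p - 1)) :
    genPoly p g = ∑ u ∈ range (2 * p), C (seqValue p u u) * X ^ u := by
  simp only [genPoly, seqS_eq_seqValue (by omega) hgodd hg
    (ZMod.quadraticChar_two_of_mod_eight_eq_three hp8)]

theorem genPolyModTwo_eq_sum_seqValue (hp8 : p % 8 = 3) (hgodd : Odd g)
    (hg : IsPrimitiveRoot (g : ZMod p) (p - 1)) :
    genPolyModTwo p g = ∑ u ∈ range (2 * p),
      C (ZMod.castHom (by norm_num : 2 ∣ 4) (ZMod 2) (seqValue p u u)) * X ^ u := by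
  simp only [genPolyModTwo, genPoly_eq_sum_seqValue hp8 hgodd hg, Polynomial.map_sum,
    Polynomial.map_mul, map_C, Polynomial.map_pow, map_X]

theorem eval_one_genPoly (hp8 : p % 8 = 3) (hgodd : Odd g)
    (hg : IsPrimitiveRoot (g : ZMod p) (p - 1)) : (genPoly p g).eval 1 = 0 := by
  have hcop : Nat.Coprime 2 p := Nat.coprime_two_left.mpr (Nat.odd_iff.mpr (by omega))
  simp only [genPoly_eq_sum_seqValue hp8 hgodd hg, eval_finsetSum, eval_mul, eval_C, eval_pow,
    eval_X, one_pow, mul_one]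
  rw [ZMod.sum_range_mul_eq_sum_sum hcop (seqValue p), sum_comm]
  simp only [sum_seqValue]
  rw [← add_sum_erase _ _ (mem_univ 0), if_pos rfl,
    sum_congr rfl fun x hx => if_neg (ne_of_mem_erase hx), sum_const,
    card_erase_of_mem (mem_univ 0), card_univ, ZMod.card, nsmul_eq_mul, ← ZMod.natCast_mod,
    show (p - 1) % 4 = 2 by omega]
  decide

theorem eval_one_derivative_genPolyModTwo (hp8 : p % 8 = 3) (hgodd : Odd g)
    (hg : IsPrimitiveRoot (g : ZMod p) (p - 1)) :
    (derivative (genPolyModTwo p g)).eval 1 = 1 := by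
  have hcop : Nat.Coprime 2 p := Nat.coprime_two_left.mpr (Nat.odd_iff.mpr (by omega))
  simp only [genPolyModTwo_eq_sum_seqValue hp8 hgodd hg, derivative_sum, derivative_C_mul_X_pow,
    eval_finsetSum, eval_mul, eval_C, eval_pow, eval_X, one_pow, mul_one]
  rw [ZMod.sum_range_mul_eq_sum_sum hcop
    (fun a x => ZMod.castHom (by norm_num : 2 ∣ 4) (ZMod 2) (seqValue p a x) * a),
    ZMod.sum_univ_two]
  simp only [mul_zero, sum_const_zero, mul_one, zero_add, castHom_seqValue_one, sum_boole,
    ZMod.card_quadraticChar_eq_neg_one hg (by omega)]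
  rw [← ZMod.natCast_mod, show (p - 1) / 2 % 2 = 1 by omega, Nat.cast_one]

theorem aeval_genPolyModTwo (hp8 : p % 8 = 3) (hgodd : Odd g)
    (hg : IsPrimitiveRoot (g : ZMod p) (p - 1)) {A : Type*} [CommRing A] [Algebra (ZMod 2) A]
    {β : A} (hβ : ∑ i ∈ range p, β ^ i = 0) : aeval β (genPolyModTwo p g) = -1 := by
  have hcop : Nat.Coprime 2 p := Nat.coprime_two_left.mpr (Nat.odd_iff.mpr (by omega))
  have hβp : β ^ p = 1 := by
    rw [← sub_eq_zero, ← mul_geom_sum, hβ, mul_zero]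
  have hpow (u : ℕ) : β ^ u = β ^ (u : ZMod p).val := by
    rw [ZMod.val_natCast, ← pow_eq_pow_mod u hβp]
  simp only [genPolyModTwo_eq_sum_seqValue hp8 hgodd hg, map_sum, map_mul, aeval_C, map_pow,
    aeval_X]
  conv_lhs => enter [2, u, 2]; rw [hpow u]
  rw [ZMod.sum_range_mul_eq_sum_sum hcop (fun a x => algebraMap (ZMod 2) A
    (ZMod.castHom (by norm_num : 2 ∣ 4) (ZMod 2) (seqValue p a x)) * β ^ x.val), sum_comm]
  simp only [← sum_mul, ← map_sum (algebraMap (ZMod 2) A), sum_castHom_seqValue]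
  have hβ' : ∑ x : ZMod p, β ^ x.val = 0 := by
    rw [← hβ, ← ZMod.sum_range_natCast]
    exact sum_congr rfl fun i hi => by rw [ZMod.val_natCast_of_lt (mem_range.mp hi)]
  rw [← add_sum_erase _ _ (mem_univ 0), ZMod.val_zero, pow_zero] at hβ'
  rw [← add_sum_erase _ _ (mem_univ 0), if_pos rfl, map_zero, zero_mul, zero_add,
    sum_congr rfl fun x hx => by rw [if_neg (ne_of_mem_erase hx), map_one, one_mul]]
  exact eq_neg_of_add_eq_zero_right hβ'

end Evaluation

section LinearComplexity

variable {p g : ℕ} [Fact p.Prime]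

theorem isCoprime_geom_sum_genPolyModTwo (hp8 : p % 8 = 3) (hgodd : Odd g)
    (hg : IsPrimitiveRoot (g : ZMod p) (p - 1)) :
    IsCoprime (∑ i ∈ range p, (X : (ZMod 2)[X]) ^ i) (genPolyModTwo p g) := by
  rw [isCoprime_iff_aeval_ne_zero]
  intro A _ _ _ β
  by_cases hβ : ∑ i ∈ range p, β ^ i = 0
  · right
    rw [aeval_genPolyModTwo hp8 hgodd hg hβ]
    exact neg_ne_zero.mpr one_ne_zero
  · left
    simpa using hβ

theorem le_natDegree_of_dvd_genPolyModTwo_mul (hp8 : p % 8 = 3) (hgodd : Odd g)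
    (hg : IsPrimitiveRoot (g : ZMod p) (p - 1)) {Q : (ZMod 2)[X]} (hQ : Q ≠ 0)
    (hdvd : X ^ (2 * p) - 1 ∣ genPolyModTwo p g * Q) : 2 * p - 1 ≤ Q.natDegree := by
  have hp := (Fact.out : p.Prime).two_le
  rw [X_pow_two_mul_sub_one_eq_of_charP_two] at hdvd
  have hsq : ¬(X - C 1) ^ 2 ∣ genPolyModTwo p g := fun h => by
    simpa [eval_one_derivative_genPolyModTwo hp8 hgodd hg] using
      eval_derivative_eq_zero_of_sq_dvd h
  have hcop : IsCoprime (X - C 1) (∑ i ∈ range p, (X : (ZMod 2)[X]) ^ i) := by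
    rw [(prime_X_sub_C 1).irreducible.coprime_iff_not_dvd, dvd_iff_isRoot, IsRoot, eval_geom_sum]
    simp [(Nat.odd_iff.mpr (by omega : p % 2 = 1)).natCast_zmod_two]
  have := le_natDegree_of_sq_mul_sq_dvd_mul (prime_X_sub_C 1) hsq hcop
    (isCoprime_geom_sum_genPolyModTwo hp8 hgodd hg) hQ hdvd
  rw [natDegree_X_sub_C, natDegree_geom_sum_X (by omega)] at this
  omega

theorem le_natDegree_of_dvd_genPoly_mul (hp8 : p % 8 = 3) (hgodd : Odd g)
    (hg : IsPrimitiveRoot (g : ZMod p) (p - 1)) {Q : (ZMod 4)[X]} (hQ : Q.eval 0 = 1)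
    (hdvd : X ^ (2 * p) - 1 ∣ genPoly p g * Q) : 2 * p - 1 ≤ Q.natDegree := by
  set φ := ZMod.castHom (by norm_num : 2 ∣ 4) (ZMod 2)
  have hQ' : Q.map φ ≠ 0 := by
    have h0 : (Q.map φ).coeff 0 = 1 := by rw [coeff_map, coeff_zero_eq_eval_zero, hQ, map_one]
    exact fun h => by simp [h] at h0
  refine le_trans ?_ (natDegree_map_le (f := φ) (p := Q))
  apply le_natDegree_of_dvd_genPolyModTwo_mul hp8 hgodd hg hQ'
  simpa [genPolyModTwo, Polynomial.map_mul] using Polynomial.map_dvd φ hdvd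

end LinearComplexity

theorem stmt1_general (p g : ℕ) (hp : p.Prime) (hp8 : p % 8 = 3)
    (hgodd : Odd g)
    (hg1 : orderOf (g : ZMod p) = p - 1) :
    linComplexity p g = 2 * p - 1 := by
  have : Fact p.Prime := ⟨hp⟩
  have : Fact (1 < 4) := ⟨by norm_num⟩
  have hg := hg1 ▸ IsPrimitiveRoot.orderOf (g : ZMod p)
  have hmem : 2 * p - 1 ∈ { L | ∃ C : Polynomial (ZMod 4), C.eval 0 = 1 ∧ C.natDegree = L ∧
      (Polynomial.X ^ (2 * p) - 1) ∣ genPoly p g * C } :=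
    ⟨∑ i ∈ range (2 * p), X ^ i, by simp [eval_geom_sum, hp.ne_zero],
      natDegree_geom_sum_X (by omega),
      X_pow_sub_one_dvd_mul_geom_sum (eval_one_genPoly hp8 hgodd hg) _⟩
  refine le_antisymm (Nat.sInf_le hmem) (le_csInf ⟨_, hmem⟩ ?_)
  rintro L ⟨C, hC0, rfl, hdvd⟩
  exact le_natDegree_of_dvd_genPoly_mul hp8 hgodd hg hC0 hdvd

theorem stmt1 (p g : ℕ) (hp : p.Prime) (hpodd : Odd p) (hp8 : p % 8 = 3)
    (hgodd : Odd g)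
    (hg1 : orderOf (g : ZMod p) = p - 1)
    (hg2 : orderOf (g : ZMod (2 * p)) = p - 1) :
    linComplexity p g = 2 * p - 1 :=
  stmt1_general p g hp hp8 hgodd hg1
end

section
/- Assume p ≡ ±1 (mod 8). Then for j = 0, 1, every coefficient of the polynomials Γ_j(X) = Π_{v ∈ D_j} (X - γ^v) and Λ_j(X) = Π_{v ∈ E_j} (X - γ^v) in R[X] lies in the image of the canonical ring map Z_4 → R; that is, Γ_j and Λ_j are polynomials over Z_4. -/
/-!
The Galois ring `R = ℤ/4[X]/(f)` carries a Frobenius lift `φ`, a ring endomorphism reducing to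
squaring on the residue field `R/2R = 𝔽₂[X]/(f mod 2)`; it is obtained by Hensel-lifting the
square of the root, and its fixed ring is exactly the image of `ℤ/4`. For `β` of odd order `p`
the unit `φ β / β²` is `≡ 1 (mod 2)`, hence of order dividing `2`, hence `φ β = β²`; so
`φ γ = -β² = γ^(p+2)`, i.e. `φ` acts on the exponents of `γ` as multiplication by `p + 2`.
Since `p ≡ ±1 (mod 8)`, `2` is a square mod `p`, and as `p + 2` is odd this makes `p + 2` an even
power of `g` modulo `2p`. Multiplication by it therefore permutes each of `D_j` and `E_j`, so `φ`
fixes the coefficients of `Γ_j` and `Λ_j`.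
-/

open Polynomial

/-- The Galois ring `GR(4^r,4) = Z_4[X]/(f)` for a basic irreducible polynomial `f`. -/
abbrev GaloisR (f : Polynomial (ZMod 4)) : Type :=
  Polynomial (ZMod 4) ⧸ Ideal.span {f}

/-- `S_0(γ) = Σ_{u ∈ D_0} γ^u`, computed with the integer representatives of `D_0`. -/
noncomputable def S0val (p g : ℕ) (f : Polynomial (ZMod 4)) (γ : (GaloisR f)ˣ) : GaloisR f :=
  ∑ u ∈ Dcl p g 0, (γ : GaloisR f) ^ u.val

/-- `Γ_j(X) = Π_{v ∈ D_j} (X - γ^v)` in `R[X]`. -/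
noncomputable def GammaP (p g : ℕ) (f : Polynomial (ZMod 4)) (γ : (GaloisR f)ˣ) (j : ℕ) :
    Polynomial (GaloisR f) :=
  ∏ v ∈ Dcl p g j, (Polynomial.X - Polynomial.C ((γ : GaloisR f) ^ v.val))

/-- `Λ_j(X) = Π_{v ∈ E_j} (X - γ^v)` in `R[X]`. -/
noncomputable def LambdaP (p g : ℕ) (f : Polynomial (ZMod 4)) (γ : (GaloisR f)ˣ) (j : ℕ) :
    Polynomial (GaloisR f) :=
  ∏ v ∈ Ecl p g j, (Polynomial.X - Polynomial.C ((γ : GaloisR f) ^ v.val))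

lemma Polynomial.eval₂_pow_expChar {n q : ℕ} {F : Type*} [CommRing F] [ExpChar F q]
    (i : ZMod n →+* F) (b : F) (P : (ZMod n)[X]) : P.eval₂ i b ^ q = P.eval₂ i (b ^ q) := by
  rw [← frobenius_def, hom_eval₂, RingHom.ext_zmod ((frobenius F q).comp i) i, frobenius_def]

lemma Polynomial.eval_sub_two_mul_eq_zero {A : Type*} [CommRing A] (h4 : (4 : A) = 0)
    (P : A[X]) {z a u : A} (ha : P.eval z = 2 * a) (hu : P.derivative.eval z * u = 1) :
    P.eval (z - 2 * (a * u)) = 0 := by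
  obtain ⟨k, hk⟩ := binomExpansion P z (-(2 * (a * u)))
  rw [sub_eq_add_neg, hk, ha]
  linear_combination (-(2 * a)) * hu + (k * (a * u) ^ 2) * h4

lemma isUnit_of_mul_eq_one_add_two_mul {A : Type*} [CommRing A] (h4 : (4 : A) = 0) {z z' w : A}
    (h : z * z' = 1 + 2 * w) : IsUnit z := by
  refine isUnit_of_mul_isUnit_left (y := z') (h ▸ IsNilpotent.isUnit_one_add ⟨2, ?_⟩)
  linear_combination w ^ 2 * h4

lemma eq_one_of_pow_eq_one_of_odd {A : Type*} [CommRing A] (h4 : (4 : A) = 0) {t w : A}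
    (ht : t = 1 + 2 * w) {p : ℕ} (hp : Odd p) (htp : t ^ p = 1) : t = 1 := by
  obtain ⟨k, rfl⟩ := hp
  have ht2 : t ^ 2 = 1 := by rw [ht]; linear_combination (w + w ^ 2) * h4
  rw [← htp, pow_succ, pow_mul, ht2, one_pow, one_mul]

lemma neg_pow_two_mul_eq_one {M : Type*} [Monoid M] [HasDistribNeg M] {b : M} {p : ℕ}
    (hb : b ^ p = 1) : (-b) ^ (2 * p) = 1 := by
  rw [pow_mul, neg_sq, ← pow_mul, mul_comm, pow_mul, hb, one_pow]

lemma Finset.image_mul_left_eq_self {M : Type*} [Monoid M] [DecidableEq M] {u : M} (hu : IsUnit u)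
    {T : Finset M} (hT : ∀ v ∈ T, u * v ∈ T) : T.image (u * ·) = T :=
  Finset.eq_of_subset_of_card_le (Finset.image_subset_iff.mpr hT)
    (Finset.card_image_of_injective _ hu.mul_right_injective).ge

lemma pow_eq_pow_of_natCast_eq {M : Type*} [Monoid M] {x : M} {n a b : ℕ} (hx : x ^ n = 1)
    (h : (a : ZMod n) = b) : x ^ a = x ^ b := by
  rw [pow_eq_pow_mod a hx, pow_eq_pow_mod b hx, (ZMod.natCast_eq_natCast_iff' a b n).mp h]

lemma pow_val_natCast_mul {M : Type*} [Monoid M] {x : M} {n : ℕ} [NeZero n] (hx : x ^ n = 1)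
    (k : ℕ) (v : ZMod n) : x ^ ((k : ZMod n) * v).val = (x ^ k) ^ v.val := by
  rw [← pow_mul]
  exact pow_eq_pow_of_natCast_eq hx (by simp)

lemma Polynomial.map_prod_X_sub_C_of_image_eq {S ι : Type*} [CommRing S] [DecidableEq ι]
    (φ : S →+* S) {σ : ι → ι} (hσ : Function.Injective σ) {T : Finset ι} (hT : T.image σ = T)
    {a : ι → S} (ha : ∀ i ∈ T, φ (a i) = a (σ i)) :
    (∏ i ∈ T, (X - C (a i))).map φ = ∏ i ∈ T, (X - C (a i)) := by
  rw [Polynomial.map_prod]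
  calc ∏ i ∈ T, (X - C (a i)).map φ = ∏ i ∈ T, (X - C (a (σ i))) :=
        Finset.prod_congr rfl fun i hi => by rw [Polynomial.map_sub, map_X, map_C, ha i hi]
    _ = ∏ i ∈ T.image σ, (X - C (a i)) := by rw [Finset.prod_image fun i _ j _ h => hσ h]
    _ = ∏ i ∈ T, (X - C (a i)) := by rw [hT]

abbrev reduceMod2 : ZMod 4 →+* ZMod 2 := ZMod.castHom (by norm_num) (ZMod 2)

lemma Polynomial.exists_eq_two_mul_of_map_reduceMod2_eq_zero {q : (ZMod 4)[X]}
    (hq : q.map reduceMod2 = 0) : ∃ h, q = 2 * h := by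
  have hker : RingHom.ker reduceMod2 ≤ (Ideal.span {2}).comap C := fun a ha => by
    obtain ⟨d, rfl⟩ : ∃ d, a = 2 * d := by rw [RingHom.mem_ker] at ha; revert a; decide
    exact Ideal.mem_span_singleton'.mpr ⟨C d, by rw [C_mul, C_ofNat, mul_comm]⟩
  have hq' : q ∈ RingHom.ker (mapRingHom reduceMod2) := hq
  rw [ker_mapRingHom] at hq'
  obtain ⟨h, rfl⟩ := Ideal.mem_span_singleton'.mp (Ideal.map_le_iff_le_comap.mpr hker hq')
  exact ⟨h, mul_comm _ _⟩

namespace GaloisR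

variable {f : (ZMod 4)[X]}

abbrev Residue (f : (ZMod 4)[X]) : Type := AdjoinRoot (f.map reduceMod2)

noncomputable def toResidue (f : (ZMod 4)[X]) : GaloisR f →+* Residue f :=
  Ideal.Quotient.lift _ ((AdjoinRoot.mk _).comp (mapRingHom reduceMod2)) fun q hq => by
    obtain ⟨h, rfl⟩ := Ideal.mem_span_singleton'.mp hq
    simp [mul_comm]

lemma toResidue_mk (q : (ZMod 4)[X]) :
    toResidue f (Ideal.Quotient.mk _ q) = AdjoinRoot.mk _ (q.map reduceMod2) := rfl

lemma toResidue_surjective : Function.Surjective (toResidue f) := by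
  intro z
  obtain ⟨q, rfl⟩ := AdjoinRoot.mk_surjective z
  obtain ⟨q', rfl⟩ := map_surjective reduceMod2 (ZMod.castHom_surjective _) q
  exact ⟨Ideal.Quotient.mk _ q', toResidue_mk q'⟩

lemma toResidue_aeval (z : GaloisR f) (q : (ZMod 4)[X]) :
    toResidue f (aeval z q) = (q.map reduceMod2).eval₂ (AdjoinRoot.of _) (toResidue f z) := by
  rw [aeval_def, hom_eval₂, eval₂_map]
  congr 1
  exact RingHom.ext_zmod _ _

lemma four_eq_zero : (4 : GaloisR f) = 0 := by
  rw [← map_ofNat (algebraMap (ZMod 4) (GaloisR f)) 4]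
  exact map_zero _

lemma toResidue_two : toResidue f 2 = 0 := by
  rw [map_ofNat, ← map_ofNat (algebraMap (ZMod 2) (Residue f)) 2]
  exact map_zero _

lemma toResidue_eq_zero_iff {z : GaloisR f} : toResidue f z = 0 ↔ ∃ w, z = 2 * w := by
  refine ⟨fun hz => ?_, fun ⟨w, hw⟩ => by rw [hw, map_mul, toResidue_two, zero_mul]⟩
  obtain ⟨q, rfl⟩ := Ideal.Quotient.mk_surjective z
  rw [toResidue_mk, AdjoinRoot.mk_eq_zero] at hz
  obtain ⟨b, hb⟩ := hz
  obtain ⟨b', rfl⟩ := map_surjective reduceMod2 (ZMod.castHom_surjective _) b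
  obtain ⟨h, hh⟩ := exists_eq_two_mul_of_map_reduceMod2_eq_zero (q := q - f * b')
    (by rw [Polynomial.map_sub, Polynomial.map_mul, hb, sub_self])
  refine ⟨Ideal.Quotient.mk _ h, ?_⟩
  rw [eq_add_of_sub_eq' hh, map_add, map_mul, Ideal.Quotient.eq_zero_iff_mem.mpr
    (Ideal.mem_span_singleton_self f), zero_mul, zero_add, map_mul, map_ofNat]

lemma isUnit_of_isUnit_toResidue {z : GaloisR f} (hz : IsUnit (toResidue f z)) : IsUnit z := by
  obtain ⟨z', hz'⟩ := toResidue_surjective (f := f) ↑hz.unit⁻¹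
  obtain ⟨w, hw⟩ := toResidue_eq_zero_iff.mp (show toResidue f (z * z' - 1) = 0 by
    rw [map_sub, map_mul, hz', IsUnit.mul_val_inv, map_one, sub_self])
  exact isUnit_of_mul_eq_one_add_two_mul four_eq_zero (eq_add_of_sub_eq' hw)

lemma exists_eq_two_mul_of_two_mul_eq_zero (hf : f.Monic) {z : GaloisR f} (hz : 2 * z = 0) :
    ∃ w, z = 2 * w := by
  revert z
  change ∀ z : AdjoinRoot f, 2 * z = 0 → ∃ w, z = 2 * w
  intro z hz
  let e := (AdjoinRoot.powerBasis' hf).basis.equivFun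
  refine ⟨e.symm fun i => if e z i = 2 then 1 else 0, e.injective (funext fun i => ?_)⟩
  have hzi : e z i + e z i = 0 := by simpa [two_mul] using congrFun (congrArg e hz) i
  rw [two_mul, map_add, LinearEquiv.apply_symm_apply, Pi.add_apply]
  generalize e z i = c at hzi ⊢
  revert c
  decide

lemma exists_eq_algebraMap_add_two_mul (hirr : Irreducible (f.map reduceMod2)) {w : GaloisR f}
    (hw : toResidue f w ^ 2 = toResidue f w) : ∃ e w', w = algebraMap (ZMod 4) _ e + 2 * w' := by
  have := Fact.mk hirr
  rcases mul_eq_zero.mp (show toResidue f w * (toResidue f w - 1) = 0 by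
      linear_combination hw) with h0 | h1
  · obtain ⟨w', hw'⟩ := toResidue_eq_zero_iff.mp h0
    exact ⟨0, w', by rw [map_zero, zero_add, hw']⟩
  · obtain ⟨w', hw'⟩ := toResidue_eq_zero_iff.mp (show toResidue f (w - 1) = 0 by
      rw [map_sub, map_one, h1])
    exact ⟨1, w', by rw [map_one, ← hw', add_sub_cancel]⟩

def IsFrobeniusLift (φ : GaloisR f →+* GaloisR f) : Prop :=
  ∀ z, toResidue f (φ z) = toResidue f z ^ 2

lemma exists_isFrobeniusLift (hirr : Irreducible (f.map reduceMod2)) :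
    ∃ φ : GaloisR f →+* GaloisR f, IsFrobeniusLift φ := by
  have := Fact.mk hirr
  have : CharP (Residue f) 2 := charP_of_injective_algebraMap (algebraMap (ZMod 2) _).injective 2
  have : ExpChar (Residue f) 2 := ExpChar.prime Nat.prime_two
  set x : GaloisR f := Ideal.Quotient.mk _ X
  have hx : toResidue f x = AdjoinRoot.root _ := by
    rw [toResidue_mk, Polynomial.map_X, AdjoinRoot.mk_X]
  have haeval_x (q : (ZMod 4)[X]) : aeval x q = Ideal.Quotient.mk _ q := by
    rw [show x = Ideal.Quotient.mkₐ (ZMod 4) _ X from rfl, aeval_algHom_apply, aeval_X_left_apply]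
    rfl
  have hroot_sq :
      (f.map reduceMod2).eval₂ (AdjoinRoot.of _) (AdjoinRoot.root (f.map reduceMod2) ^ 2) = 0 := by
    rw [← eval₂_pow_expChar, AdjoinRoot.eval₂_root, zero_pow two_ne_zero]
  obtain ⟨a, ha⟩ := toResidue_eq_zero_iff.mp (show toResidue f (aeval (x ^ 2) f) = 0 by
    rw [toResidue_aeval, map_pow, hx, hroot_sq])
  obtain ⟨u, hu⟩ : ∃ u, aeval (x ^ 2) (derivative f) * u = 1 := by
    refine (isUnit_of_isUnit_toResidue (Ne.isUnit ?_)).exists_right_inv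
    rw [toResidue_aeval, map_pow, hx, ← derivative_map]
    exact (PerfectField.separable_of_irreducible hirr).eval₂_derivative_ne_zero _ hroot_sq
  -- one Newton step from `x²`, which is a root of `f` modulo `2`
  set y := x ^ 2 - 2 * (a * u)
  have hy : aeval y f = 0 := by
    rw [← eval_map_algebraMap] at ha ⊢
    rw [← eval_map_algebraMap, ← derivative_map] at hu
    exact eval_sub_two_mul_eq_zero four_eq_zero _ ha hu
  refine ⟨Ideal.Quotient.lift _ (aeval y).toRingHom fun q hq => ?_, fun z => ?_⟩
  · obtain ⟨h, rfl⟩ := Ideal.mem_span_singleton'.mp hq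
    simp [hy]
  obtain ⟨q, rfl⟩ := Ideal.Quotient.mk_surjective z
  have hy' : toResidue f y = toResidue f x ^ 2 := by
    rw [map_sub, map_mul, toResidue_two, zero_mul, sub_zero, map_pow]
  rw [Ideal.Quotient.lift_mk, AlgHom.toRingHom_eq_coe, RingHom.coe_coe, toResidue_aeval, hy',
    ← eval₂_pow_expChar, ← toResidue_aeval, haeval_x]

namespace IsFrobeniusLift

variable {φ : GaloisR f →+* GaloisR f} (hφ : IsFrobeniusLift φ)
include hφ

lemma mem_range_algebraMap_of_apply_eq (hf : f.Monic) (hirr : Irreducible (f.map reduceMod2))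
    {c : GaloisR f} (hc : φ c = c) : c ∈ Set.range (algebraMap (ZMod 4) (GaloisR f)) := by
  have hφ_alg (e : ZMod 4) : φ (algebraMap _ _ e) = algebraMap _ _ e := by
    rw [← RingHom.comp_apply, RingHom.ext_zmod (φ.comp (algebraMap _ _)) (algebraMap _ _)]
  -- `c = e + 2w`; then `2 (φ w - w) = 0`, so `φ w ≡ w (mod 2)` and `w` is again `≡ 0` or `1`
  obtain ⟨e, w, rfl⟩ := exists_eq_algebraMap_add_two_mul hirr (by rw [← hφ, hc])
  obtain ⟨t, ht⟩ := exists_eq_two_mul_of_two_mul_eq_zero hf (z := φ w - w) <| by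
    have := hc
    rw [map_add, map_mul, map_ofNat, hφ_alg] at this
    linear_combination this
  have hw : toResidue f w ^ 2 = toResidue f w := by
    rw [← hφ, ← sub_eq_zero, ← map_sub, ht, map_mul, toResidue_two, zero_mul]
  obtain ⟨e', s, rfl⟩ := exists_eq_algebraMap_add_two_mul hirr hw
  refine ⟨e + 2 * e', ?_⟩
  rw [map_add, map_mul, map_ofNat]
  linear_combination (-s) * four_eq_zero

lemma apply_eq_sq_of_pow_eq_one {p : ℕ} (hp : Odd p) {b : GaloisR f} (hb : b ^ p = 1) :
    φ b = b ^ 2 := by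
  set c := b ^ (p - 1)
  have hbc : b * c = 1 := by rw [← pow_succ', Nat.sub_add_cancel hp.pos, hb]
  -- `t = φ b / b² ≡ 1 (mod 2)`, so `t² = 1`; as also `t ^ p = 1` with `p` odd, `t = 1`
  set t := φ b * c ^ 2
  have ht_res : toResidue f t = 1 := by
    rw [map_mul, hφ, map_pow, ← mul_pow, ← map_mul, hbc, map_one, one_pow]
  have hcp : c ^ p = 1 := by rw [← pow_mul, mul_comm, pow_mul, hb, one_pow]
  have htp : t ^ p = 1 := by
    rw [mul_pow, ← map_pow, hb, map_one, one_mul, ← pow_mul, mul_comm, pow_mul, hcp, one_pow]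
  obtain ⟨w, hw⟩ := toResidue_eq_zero_iff.mp (show toResidue f (t - 1) = 0 by
    rw [map_sub, ht_res, map_one, sub_self])
  have ht : t = 1 := eq_one_of_pow_eq_one_of_odd four_eq_zero (eq_add_of_sub_eq' hw) hp htp
  calc φ b = t * b ^ 2 := by rw [mul_assoc, ← mul_pow, mul_comm c, hbc, one_pow, mul_one]
    _ = b ^ 2 := by rw [ht, one_mul]

lemma apply_neg_eq_pow_add_two {p : ℕ} (hp : Odd p) {b : GaloisR f} (hb : b ^ p = 1) :
    φ (-b) = (-b) ^ (p + 2) := by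
  have h : (-b) ^ p = -1 := (hp.neg_pow b).trans (congrArg _ hb)
  rw [pow_add, h, map_neg, hφ.apply_eq_sq_of_pow_eq_one hp hb]
  ring

lemma coeff_prod_X_sub_C_pow_mem_range (hf : f.Monic) (hirr : Irreducible (f.map reduceMod2))
    {n k : ℕ} [NeZero n] {x : GaloisR f} (hx : x ^ n = 1) (hφx : φ x = x ^ k)
    (hk : IsUnit (k : ZMod n)) {T : Finset (ZMod n)} (hT : ∀ v ∈ T, (k : ZMod n) * v ∈ T)
    (i : ℕ) :
    (∏ v ∈ T, (X - C (x ^ v.val))).coeff i ∈ Set.range (algebraMap (ZMod 4) (GaloisR f)) := by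
  refine hφ.mem_range_algebraMap_of_apply_eq hf hirr ?_
  rw [← coeff_map, map_prod_X_sub_C_of_image_eq φ hk.mul_right_injective
    (Finset.image_mul_left_eq_self hk hT) fun v _ => by rw [map_pow, hφx, pow_val_natCast_mul hx]]

end IsFrobeniusLift

end GaloisR

section CyclotomicClasses

variable {p g : ℕ}

lemma exists_natCast_add_two_eq_pow_two_mul (hp : p.Prime) (hpodd : Odd p)
    (hgodd : Odd g) (hg : orderOf (g : ZMod p) = p - 1) (hp8 : p % 8 = 1 ∨ p % 8 = 7) :
    ∃ n, ((p + 2 : ℕ) : ZMod (2 * p)) = (g : ZMod (2 * p)) ^ (2 * n) := by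
  have := Fact.mk hp
  have hp3 : 3 ≤ p := by obtain ⟨k, rfl⟩ := hpodd; have := hp.two_le; omega
  obtain ⟨c, hc⟩ := (ZMod.exists_sq_eq_two_iff (by omega)).mpr hp8
  have hc0 : c ≠ 0 := by
    rintro rfl
    have := Nat.le_of_dvd two_pos ((ZMod.natCast_eq_zero_iff 2 p).mp (by simpa using hc))
    omega
  have : NeZero (p - 1) := ⟨by omega⟩
  have hζ : IsPrimitiveRoot (g : ZMod p) (p - 1) := hg ▸ IsPrimitiveRoot.orderOf _
  obtain ⟨n, -, hn⟩ := hζ.eq_pow_of_pow_eq_one (ZMod.pow_card_sub_one_eq_one hc0)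
  refine ⟨n, ?_⟩
  have hdvd_p : (p : ℤ) ∣ g ^ (2 * n) - (p + 2) := by
    rw [← ZMod.intCast_zmod_eq_zero_iff_dvd]
    push_cast
    rw [pow_mul', hn, hc, ZMod.natCast_self]
    ring
  have hdvd_two : (2 : ℤ) ∣ g ^ (2 * n) - (p + 2) :=
    even_iff_two_dvd.mp (hgodd.natCast.pow.sub_odd (hpodd.natCast.add_even even_two))
  have hcop : IsCoprime (2 : ℤ) p := Nat.isCoprime_iff_coprime.mpr (Nat.coprime_two_left.mpr hpodd)
  have := (ZMod.intCast_eq_intCast_iff_dvd_sub (p + 2) (g ^ (2 * n)) (2 * p)).mpr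
    (by exact_mod_cast hcop.mul_dvd hdvd_two hdvd_p)
  exact_mod_cast this

lemma mem_Dcl_iff (hpodd : Odd p) (hp : 1 < p) (hg : (g : ZMod (2 * p)) ^ (p - 1) = 1) {j : ℕ}
    {v : ZMod (2 * p)} : v ∈ Dcl p g j ↔ ∃ n, v = (g : ZMod (2 * p)) ^ (2 * n + j) := by
  obtain ⟨k, rfl⟩ := hpodd
  have hk : (2 * k + 1 - 1) / 2 = k := by omega
  simp only [Dcl, hk, Finset.mem_image, Finset.mem_range]
  refine ⟨fun ⟨n, _, hn⟩ => ⟨n, hn.symm⟩, fun ⟨n, hn⟩ => ⟨n % k, Nat.mod_lt _ (by omega), ?_⟩⟩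
  have hg2 : ((g : ZMod (2 * (2 * k + 1))) ^ 2) ^ k = 1 := by
    rw [← pow_mul, ← hg, Nat.add_sub_cancel]
  rw [hn, pow_add, pow_add, pow_mul, pow_mul, ← pow_eq_pow_mod n hg2]

lemma pow_two_mul_mul_mem_Dcl (hpodd : Odd p) (hp : 1 < p)
    (hg : (g : ZMod (2 * p)) ^ (p - 1) = 1) (m : ℕ) {j : ℕ} {v : ZMod (2 * p)}
    (hv : v ∈ Dcl p g j) : (g : ZMod (2 * p)) ^ (2 * m) * v ∈ Dcl p g j := by
  obtain ⟨n, rfl⟩ := (mem_Dcl_iff hpodd hp hg).mp hv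
  exact (mem_Dcl_iff hpodd hp hg).mpr ⟨m + n, by ring⟩

lemma pow_two_mul_mul_mem_Ecl (hpodd : Odd p) (hp : 1 < p)
    (hg : (g : ZMod (2 * p)) ^ (p - 1) = 1) (m : ℕ) {j : ℕ} {v : ZMod (2 * p)}
    (hv : v ∈ Ecl p g j) : (g : ZMod (2 * p)) ^ (2 * m) * v ∈ Ecl p g j := by
  obtain ⟨u, hu, rfl⟩ := Finset.mem_image.mp hv
  exact Finset.mem_image.mpr ⟨_, pow_two_mul_mul_mem_Dcl hpodd hp hg m hu, by ring⟩

end CyclotomicClasses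

open GaloisR in
theorem stmt16 (p g : ℕ) (hp : p.Prime) (hpodd : Odd p)
    (hgodd : Odd g)
    (hg1 : orderOf (g : ZMod p) = p - 1)
    (hg2 : orderOf (g : ZMod (2 * p)) = p - 1)
    (f : Polynomial (ZMod 4)) (hf : f.Monic)
    (hfirr : Irreducible (f.map (ZMod.castHom (by norm_num : (2:ℕ) ∣ 4) (ZMod 2))))
    (β : (GaloisR f)ˣ) (hβ : orderOf β = p)
    (γ : (GaloisR f)ˣ) (hγ : γ = -β)
    (hp8 : p % 8 = 1 ∨ p % 8 = 7) :
    ∀ j < 2, ∀ k : ℕ,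
      (GammaP p g f γ j).coeff k ∈ Set.range (algebraMap (ZMod 4) (GaloisR f)) ∧
      (LambdaP p g f γ j).coeff k ∈ Set.range (algebraMap (ZMod 4) (GaloisR f)) := by
  have : NeZero (2 * p) := ⟨by have := hp.pos; omega⟩
  obtain ⟨φ, hφ⟩ := exists_isFrobeniusLift hfirr
  obtain ⟨n, hn⟩ := exists_natCast_add_two_eq_pow_two_mul hp hpodd hgodd hg1 hp8
  have hg : (g : ZMod (2 * p)) ^ (p - 1) = 1 := hg2 ▸ pow_orderOf_eq_one _
  have ha : IsUnit ((p + 2 : ℕ) : ZMod (2 * p)) :=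
    hn ▸ (IsUnit.of_pow_eq_one hg (by have := hp.two_le; omega)).pow _
  have hβp : (β : GaloisR f) ^ p = 1 := by
    rw [← Units.val_pow_eq_pow_val, ← hβ, pow_orderOf_eq_one, Units.val_one]
  have hγβ : (γ : GaloisR f) = -β := by rw [hγ, Units.val_neg]
  have hγ2p : (γ : GaloisR f) ^ (2 * p) = 1 := hγβ ▸ neg_pow_two_mul_eq_one hβp
  have hφγ : φ γ = γ ^ (p + 2) := hγβ ▸ hφ.apply_neg_eq_pow_add_two hpodd hβp
  intro j _ k
  exact ⟨hφ.coeff_prod_X_sub_C_pow_mem_range hf hfirr hγ2p hφγ ha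
      (fun v hv => hn ▸ pow_two_mul_mul_mem_Dcl hpodd hp.one_lt hg n hv) k,
    hφ.coeff_prod_X_sub_C_pow_mem_range hf hfirr hγ2p hφγ ha
      (fun v hv => hn ▸ pow_two_mul_mul_mem_Ecl hpodd hp.one_lt hg n hv) k⟩
end

section
/- Let P ∈ Z_4[X] be a non-constant polynomial with P(0) = 1 such that P(γ^v) = 0 (evaluating the image of P in R[X]) for every v ∈ Z_{2p} \ {0, p}, and such that P(1) ∈ {0, 2} and P(-1) ∈ {0, 2} (values in Z_4). Then deg P ≥ 2p - 1. Furthermore, if either P(1) = P(-1) = 0 or P(1) = P(-1) = 2, then deg P ≥ 2p. -/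
open Polynomial

/-!
Reduce modulo `2`: `ρ : R = GR(4^r, 4) → F = 𝔽_2[X]/(f̄)` is onto a field, with kernel `2R`,
which is also the annihilator of `2`. The image `b = ρ β` still has order `p`, since `1 + 2R`
has exponent `2`. Both `β^m` and `-β^m` (`0 < m < p`) are roots of `P`, and so is `1` modulo
`2`, so `X^p - 1 ∣ P̄` and `P = (X^p - 1) Q + 2 T`. Comparing `P` at `z` and `-z` for `z^p = 1`
gives `2 (T(z) - T(-z) + Q(-z)) = 0`, hence `Q̄(ρ z) = 0` (with `Q̄ = Q mod 2`). Thus `Q̄`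
vanishes at `b, …, b^{p-1}`, and also at `1` when `P(1) = P(-1)`, so
`deg P ≥ p + deg Q̄ ≥ 2p - 1` (resp. `2p`).
-/

section ZModFour

variable {S : Type*} [Ring S]

lemma two_dvd_of_map_eq_zero [Nontrivial S] (κ : ZMod 4 →+* S) {c : ZMod 4} (h : κ c = 0) :
    2 ∣ c := by
  have : ∀ c : ZMod 4, c = 0 ∨ c = 1 ∨ c = 2 ∨ c = -1 := by decide
  rcases this c with rfl | rfl | rfl | rfl
  · exact dvd_zero 2
  · simp at h
  · exact dvd_refl 2
  · simp at h

lemma map_eq_zero_of_two_mul_eq_zero (κ : ZMod 4 →+* S) (hκ : κ 2 = 0) {c : ZMod 4}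
    (h : 2 * c = 0) : κ c = 0 := by
  have : ∀ c : ZMod 4, 2 * c = 0 → c = 0 ∨ c = 2 := by decide
  rcases this c h with rfl | rfl
  exacts [map_zero κ, hκ]

namespace Polynomial

lemma exists_eq_two_mul_of_map_eq_zero [Nontrivial S] (κ : ZMod 4 →+* S) {D : (ZMod 4)[X]}
    (h : D.map κ = 0) : ∃ T, D = 2 * T := by
  obtain ⟨T, hT⟩ := (C_dvd_iff_dvd_coeff 2 D).2 fun i =>
    two_dvd_of_map_eq_zero κ (by rw [← coeff_map, h, coeff_zero])
  exact ⟨T, by rw [hT, C_ofNat]⟩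

lemma map_eq_zero_of_two_mul_eq_zero (κ : ZMod 4 →+* S) (hκ : κ 2 = 0) {D : (ZMod 4)[X]}
    (h : 2 * D = 0) : D.map κ = 0 := by
  ext i
  rw [coeff_map, coeff_zero]
  exact _root_.map_eq_zero_of_two_mul_eq_zero κ hκ (by rw [← coeff_ofNat_mul, h, coeff_zero])

end Polynomial

end ZModFour

section Roots

variable {F : Type*} [Field F]

lemma Polynomial.sub_le_natDegree_of_eval_pow_eq_zero {b : F} {a p : ℕ} (hb : orderOf b = p)
    {Q : F[X]} (hQ : Q ≠ 0) (h : ∀ m ∈ Finset.Ico a p, Q.eval (b ^ m) = 0) :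
    p - a ≤ Q.natDegree := by
  classical
  have hinj : Set.InjOn (b ^ ·) (Finset.Ico a p) :=
    (hb ▸ pow_injOn_Iio_orderOf).mono fun m hm => (Finset.mem_Ico.1 hm).2
  rw [← Nat.card_Ico, ← Finset.card_image_of_injOn hinj]
  by_contra! hlt
  exact hQ (eq_zero_of_natDegree_lt_card_of_eval_eq_zero' Q _ (Finset.forall_mem_image.2 h) hlt)

lemma Polynomial.monic_X_pow_sub_one {A : Type*} [Ring A] {p : ℕ} (hp : p ≠ 0) :
    (X ^ p - 1 : A[X]).Monic := by
  simpa using monic_X_pow_sub_C (1 : A) hp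

lemma Polynomial.natDegree_X_pow_sub_one {A : Type*} [Ring A] [Nontrivial A] {p : ℕ} :
    (X ^ p - 1 : A[X]).natDegree = p := by
  simpa using natDegree_X_pow_sub_C (r := (1 : A))

lemma Polynomial.map_modByMonic_X_pow_sub_one_eq_zero {A : Type*} [CommRing A] (κ : A →+* F)
    {b : F} {p : ℕ} (hp : p ≠ 0) (hb : orderOf b = p) {P : A[X]}
    (hP : ∀ m < p, (P.map κ).eval (b ^ m) = 0) : (P %ₘ (X ^ p - 1)).map κ = 0 := by
  have := κ.domain_nontrivial
  by_contra hS
  have hroots : ∀ m ∈ Finset.Ico 0 p, ((P %ₘ (X ^ p - 1)).map κ).eval (b ^ m) = 0 := by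
    intro m hm
    have hbm : (b ^ m) ^ p = 1 := by
      rw [← pow_mul, mul_comm, pow_mul, ← hb, pow_orderOf_eq_one, one_pow]
    have := congrArg (fun D => (D.map κ).eval (b ^ m)) (modByMonic_add_div P (X ^ p - 1))
    simpa [hbm, hP m (Finset.mem_Ico.1 hm).2] using this
  have hlt : (P %ₘ (X ^ p - 1)).natDegree < p := by
    have hdeg := natDegree_X_pow_sub_one (A := A) (p := p)
    have hne : (X ^ p - 1 : A[X]) ≠ 1 := fun h => hp (by rw [← hdeg, h, natDegree_one])
    simpa [hdeg] using natDegree_modByMonic_lt P (monic_X_pow_sub_one hp) hne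
  have hcard := sub_le_natDegree_of_eval_pow_eq_zero hb hS hroots
  have hmap := natDegree_map_le (f := κ) (p := P %ₘ (X ^ p - 1))
  omega

end Roots

section ResidueField

variable {R F : Type*} [CommRing R] [Algebra (ZMod 4) R] [Field F] (ρ : R →+* F)

lemma four_eq_zero_of_algebra_zmod_four : (4 : R) = 0 := by
  rw [← map_ofNat (algebraMap (ZMod 4) R) 4, show (4 : ZMod 4) = 0 from rfl, map_zero]

lemma two_eq_zero_of_ann_two_le_ker (hann : ∀ x, 2 * x = 0 → ρ x = 0) : (2 : F) = 0 := by
  rw [← map_ofNat ρ 2]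
  exact hann 2 (by rw [← four_eq_zero_of_algebra_zmod_four (R := R)]; norm_num)

lemma map_neg_of_ann_two_le_ker (hann : ∀ x, 2 * x = 0 → ρ x = 0) (x : R) :
    ρ (-x) = ρ x := by
  rw [map_neg]
  linear_combination (-ρ x) * two_eq_zero_of_ann_two_le_ker ρ hann

lemma map_aeval_eq_eval_map (A : (ZMod 4)[X]) (x : R) :
    ρ (aeval x A) = (A.map (ρ.comp (algebraMap (ZMod 4) R))).eval (ρ x) := by
  rw [aeval_def, hom_eval₂, eval_map]

lemma orderOf_map_units (hker : ∀ x, ρ x = 0 → ∃ y, x = 2 * y) {p : ℕ} (hp : Odd p) {β : Rˣ}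
    (hβ : orderOf β = p) : orderOf (ρ β) = p := by
  refine Nat.dvd_antisymm (hβ ▸ orderOf_map_dvd (ρ.toMonoidHom.comp (Units.coeHom R)) β) ?_
  set k := orderOf (ρ β)
  obtain ⟨y, hy⟩ := hker ((β : R) ^ k - 1) <| by
    rw [map_sub, map_pow, pow_orderOf_eq_one, map_one, sub_self]
  -- `β^k ∈ 1 + 2R`, and `(1 + 2y)^2 = 1` because `4 = 0`.
  have hsq : β ^ (2 * k) = 1 := Units.ext <| by
    rw [pow_mul', Units.val_pow_eq_pow_val, Units.val_pow_eq_pow_val, Units.val_one]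
    linear_combination ((β : R) ^ k + 1 + 2 * y) * hy +
      (y ^ 2 + y) * four_eq_zero_of_algebra_zmod_four (R := R)
  have := orderOf_dvd_of_pow_eq_one hsq
  rw [hβ] at this
  exact (Nat.coprime_two_right.2 hp).dvd_of_dvd_mul_left this

lemma eval_map_eq_zero_of_aeval_eq_aeval_neg (hann : ∀ x, 2 * x = 0 → ρ x = 0) {p : ℕ}
    (hp : Odd p) {P Q T : (ZMod 4)[X]} (hPQT : P = (X ^ p - 1) * Q + 2 * T) {z : R} (hz : z ^ p = 1)
    (h : aeval z P = aeval (-z) P) : (Q.map (ρ.comp (algebraMap (ZMod 4) R))).eval (ρ z) = 0 := by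
  have hnz : (-z) ^ p = -1 := by rw [hp.neg_pow, hz]
  simp only [hPQT, map_add, map_mul, map_sub, map_pow, aeval_X, map_one, map_ofNat, hz, hnz] at h
  have := hann (aeval z T - aeval (-z) T + aeval (-z) Q) (by linear_combination h)
  rwa [map_add, map_sub, map_aeval_eq_eval_map, map_aeval_eq_eval_map, map_aeval_eq_eval_map,
    map_neg_of_ann_two_le_ker ρ hann, sub_self, zero_add] at this

theorem two_mul_sub_one_le_natDegree (hker : ∀ x, ρ x = 0 → ∃ y, x = 2 * y)
    (hann : ∀ x, 2 * x = 0 → ρ x = 0) {p : ℕ} (hp : Odd p) {β : Rˣ} (hβ : orderOf β = p)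
    {P : (ZMod 4)[X]} (hP0 : P.coeff 0 = 1)
    (hroots : ∀ m, 0 < m → m < p → aeval ((β : R) ^ m) P = 0 ∧ aeval (-(β : R) ^ m) P = 0)
    (h1 : 2 * P.eval 1 = 0) :
    2 * p - 1 ≤ P.natDegree ∧ (P.eval 1 = P.eval (-1) → 2 * p ≤ P.natDegree) := by
  set κ := ρ.comp (algebraMap (ZMod 4) R)
  have hb := orderOf_map_units ρ hker hp hβ
  have hβp : (β : R) ^ p = 1 := by rw [← hβ, ← orderOf_units, pow_orderOf_eq_one]
  have hProots : ∀ m < p, (P.map κ).eval (ρ β ^ m) = 0 := by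
    rintro (_ | m) hm
    · rw [pow_zero, eval_map, eval₂_at_one]
      exact map_eq_zero_of_two_mul_eq_zero κ
        (by rw [map_ofNat]; exact two_eq_zero_of_ann_two_le_ker ρ hann) h1
    · rw [← map_pow, ← map_aeval_eq_eval_map, (hroots _ m.succ_pos hm).1, map_zero]
  have hS := map_modByMonic_X_pow_sub_one_eq_zero κ hp.pos.ne' hb hProots
  obtain ⟨T, hT⟩ := exists_eq_two_mul_of_map_eq_zero κ hS
  set Q := P /ₘ (X ^ p - 1)
  have hPQT : P = (X ^ p - 1) * Q + 2 * T := by rw [← hT, add_comm, modByMonic_add_div]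
  have hQroot : ∀ m, 0 < m → m < p → (Q.map κ).eval (ρ β ^ m) = 0 := fun m hm hmp => by
    obtain ⟨h, h'⟩ := hroots m hm hmp
    rw [← map_pow]
    exact eval_map_eq_zero_of_aeval_eq_aeval_neg ρ hann hp hPQT
      (by rw [← pow_mul, mul_comm, pow_mul, hβp, one_pow]) (h.trans h'.symm)
  have hPF : P.map κ = (X ^ p - 1) * Q.map κ := by
    conv_lhs => rw [← modByMonic_add_div P (X ^ p - 1)]
    simp [hS, Q]
  have hQ0 : Q.map κ ≠ 0 := by
    intro h
    have := congrArg (coeff · 0) hPF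
    simp [h, hP0] at this
  have hdeg : p + (Q.map κ).natDegree ≤ P.natDegree := by
    have := natDegree_map_le (f := κ) (p := P)
    rwa [hPF, (monic_X_pow_sub_one hp.pos.ne').natDegree_mul' hQ0, natDegree_X_pow_sub_one] at this
  refine ⟨?_, fun h => ?_⟩
  · have := sub_le_natDegree_of_eval_pow_eq_zero (a := 1) hb hQ0 fun m hm =>
      hQroot m (Finset.mem_Ico.1 hm).1 (Finset.mem_Ico.1 hm).2
    omega
  · have hQ1 : (Q.map κ).eval 1 = 0 := by
      have := eval_map_eq_zero_of_aeval_eq_aeval_neg ρ hann hp hPQT (one_pow p)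
        (by rw [← map_one (algebraMap (ZMod 4) R), ← map_neg,
          aeval_algebraMap_apply_eq_algebraMap_eval, aeval_algebraMap_apply_eq_algebraMap_eval, h])
      rwa [map_one] at this
    have := sub_le_natDegree_of_eval_pow_eq_zero (a := 0) hb hQ0 fun m hm => by
      rcases m with _ | m
      · rwa [pow_zero]
      · exact hQroot _ m.succ_pos (Finset.mem_Ico.1 hm).2
    omega

end ResidueField

lemma aeval_pow_eq_zero_and_aeval_neg_pow_eq_zero {R : Type*} [CommRing R] [Algebra (ZMod 4) R]
    {p : ℕ} (hp : Odd p) {β γ : R} (hβ : β ^ p = 1) (hγ : γ = -β) {P : (ZMod 4)[X]}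
    (hroots : ∀ v : ZMod (2 * p), v ≠ 0 → v ≠ (p : ZMod (2 * p)) → aeval (γ ^ v.val) P = 0)
    {m : ℕ} (hm : 0 < m) (hmp : m < p) : aeval (β ^ m) P = 0 ∧ aeval (-β ^ m) P = 0 := by
  subst hγ
  have hroot : ∀ w, 0 < w → w < 2 * p → w ≠ p → aeval ((-β) ^ w) P = 0 := by
    intro w hw hw2p hwp
    have hval := ZMod.val_natCast_of_lt hw2p
    refine hval ▸ hroots w (fun h => ?_) (fun h => hwp ?_)
    · rw [h, ZMod.val_zero] at hval
      omega
    · rw [h, ZMod.val_natCast_of_lt (by omega)] at hval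
      exact hval.symm
  -- `(-β)^(m+p) = -(-β)^m` and `(-β)^m = ±β^m`
  have h := hroot m hm (by omega) (by omega)
  have h' := hroot (m + p) (by omega) (by omega) (by omega)
  rw [pow_add, hp.neg_pow, hβ, mul_neg_one] at h'
  rw [neg_pow] at h h'
  rcases neg_one_pow_eq_or R m with hs | hs <;>
    simp only [hs, one_mul, neg_one_mul, neg_neg] at h h' <;> exact ⟨by assumption, by assumption⟩

abbrev reduceModTwo : ZMod 4 →+* ZMod 2 := ZMod.castHom (by norm_num : (2 : ℕ) ∣ 4) (ZMod 2)

namespace GaloisR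

variable {f : (ZMod 4)[X]}

noncomputable def residue (f : (ZMod 4)[X]) : GaloisR f →+* AdjoinRoot (f.map reduceModTwo) :=
  Ideal.Quotient.lift _ ((AdjoinRoot.mk _).comp (mapRingHom reduceModTwo)) fun _ ha =>
    AdjoinRoot.mk_eq_zero.2 (Polynomial.map_dvd _ (Ideal.mem_span_singleton.1 ha))

lemma residue_mk (A : (ZMod 4)[X]) :
    residue f (Ideal.Quotient.mk _ A) = AdjoinRoot.mk _ (A.map reduceModTwo) := rfl

lemma exists_eq_two_mul_of_residue_eq_zero {x : GaloisR f} (h : residue f x = 0) :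
    ∃ y, x = 2 * y := by
  obtain ⟨A, rfl⟩ := Ideal.Quotient.mk_surjective x
  rw [residue_mk] at h
  obtain ⟨G, hG⟩ := AdjoinRoot.mk_eq_zero.1 h
  obtain ⟨G, rfl⟩ := map_surjective _ (ZMod.ringHom_surjective reduceModTwo) G
  obtain ⟨T, hT⟩ := exists_eq_two_mul_of_map_eq_zero reduceModTwo (D := A - f * G)
    (by rw [Polynomial.map_sub, Polynomial.map_mul, ← hG, sub_self])
  refine ⟨Ideal.Quotient.mk _ T, ?_⟩
  rw [← map_ofNat (Ideal.Quotient.mk _) 2, ← map_mul, ← hT, Ideal.Quotient.eq, sub_sub_cancel]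
  exact Ideal.mul_mem_right _ _ (Ideal.mem_span_singleton_self f)

lemma residue_eq_zero_of_two_mul_eq_zero (hf : f.map reduceModTwo ≠ 0) {x : GaloisR f}
    (h : 2 * x = 0) : residue f x = 0 := by
  obtain ⟨A, rfl⟩ := Ideal.Quotient.mk_surjective x
  rw [← map_ofNat (Ideal.Quotient.mk _) 2, ← map_mul, Ideal.Quotient.eq_zero_iff_mem,
    Ideal.mem_span_singleton'] at h
  obtain ⟨B, hB⟩ := h
  obtain ⟨B, rfl⟩ := exists_eq_two_mul_of_map_eq_zero reduceModTwo (D := B) <| by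
    have := congrArg (Polynomial.map reduceModTwo) hB
    simpa [CharTwo.two_eq_zero, hf] using this
  have := Polynomial.map_eq_zero_of_two_mul_eq_zero reduceModTwo rfl (D := A - f * B)
    (by linear_combination -hB)
  rw [Polynomial.map_sub, Polynomial.map_mul, sub_eq_zero] at this
  rw [residue_mk, AdjoinRoot.mk_eq_zero, this]
  exact dvd_mul_right _ _

end GaloisR

theorem stmt17 (p : ℕ) (hpodd : Odd p)
    (f : Polynomial (ZMod 4))
    (hfirr : Irreducible (f.map (ZMod.castHom (by norm_num : (2:ℕ) ∣ 4) (ZMod 2))))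
    (β : (GaloisR f)ˣ) (hβ : orderOf β = p)
    (γ : (GaloisR f)ˣ) (hγ : γ = -β)
    (P : Polynomial (ZMod 4)) (hP0 : P.coeff 0 = 1)
    (hroots : ∀ v : ZMod (2 * p), v ≠ 0 → v ≠ (p : ZMod (2 * p)) →
      Polynomial.aeval ((γ : GaloisR f) ^ v.val) P = 0)
    (h1 : P.eval 1 = 0 ∨ P.eval 1 = 2) :
    2 * p - 1 ≤ P.natDegree ∧
    (((P.eval 1 = 0 ∧ P.eval (-1) = 0) ∨ (P.eval 1 = 2 ∧ P.eval (-1) = 2)) →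
      2 * p ≤ P.natDegree) := by
  have : Fact (Irreducible (f.map reduceModTwo)) := ⟨hfirr⟩
  have hβp : (β : GaloisR f) ^ p = 1 := by rw [← hβ, ← orderOf_units, pow_orderOf_eq_one]
  obtain ⟨hlow, hhigh⟩ := two_mul_sub_one_le_natDegree (GaloisR.residue f)
    (fun _ => GaloisR.exists_eq_two_mul_of_residue_eq_zero)
    (fun _ => GaloisR.residue_eq_zero_of_two_mul_eq_zero hfirr.ne_zero) hpodd hβ hP0
    (fun _ => aeval_pow_eq_zero_and_aeval_neg_pow_eq_zero hpodd hβp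
      (by rw [hγ, Units.val_neg]) hroots)
    (by rcases h1 with h | h <;> rw [h] <;> decide)
  refine ⟨hlow, fun h => hhigh ?_⟩
  rcases h with ⟨h, h'⟩ | ⟨h, h'⟩ <;> rw [h, h']
end
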